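/- Boundedness of the cube under the flow: if s ∈ [-1, 1]^N with s_l = 1 for some l, then the l-th component of the vector field, ds_l/dt = ∑_m 2 a_m c_{ml} K_{ml}(s) K_m(s), is ≤ 0; symmetrically if s_l = -1 then ds_l/dt ≥ 0. Hence the cube [-1,1]^N is forward invariant for the spin dynamics. -/

import Mathlib

/-!
Since `K_m = (1 - c_{ml} s_l) K_{ml}`, the `m`-th summand of `ds_l/dt` equals
`2 a_m c_{ml} (1 - c_{ml} s_l) K_{ml}^2`. Its sign is that of `c (1 - c s_l)`, which for
`c ∈ {-1, 0, 1}` is `≤ 0` at `s_l = 1` and `≥ 0` at `s_l = -1`.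
-/

open Finset

theorem mul_one_sub_self_nonpos {c : ℝ} (hc : c ∈ ({-1, 0, 1} : Set ℝ)) : c * (1 - c) ≤ 0 := by
  rcases hc with rfl | rfl | rfl <;> norm_num

theorem mul_one_add_self_nonneg {c : ℝ} (hc : c ∈ ({-1, 0, 1} : Set ℝ)) : 0 ≤ c * (1 + c) := by
  rcases hc with rfl | rfl | rfl <;> norm_num

theorem mul_prod_erase_mul_mul_prod {ι R : Type*} [Fintype ι] [DecidableEq ι] [CommRing R]
    (a c C : R) (f : ι → R) (l : ι) :
    2 * a * c * (C * ∏ p ∈ univ.erase l, f p) * (C * ∏ p, f p) =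
      2 * a * (c * f l) * (C * ∏ p ∈ univ.erase l, f p) ^ 2 := by
  rw [← mul_prod_erase univ f (mem_univ l)]
  ring

open Finset in
theorem stmt_16_general (N M k : ℕ) (c : Fin M → Fin N → ℝ) (a : Fin M → ℝ)
    (ha : ∀ m, 0 < a m) (hc : ∀ m p, c m p ∈ ({-1, 0, 1} : Set ℝ))
    (s : Fin N → ℝ) (l : Fin N) :
    (s l = 1 →
      ∑ m, 2 * a m * c m l *
          ((2 : ℝ) ^ (-(k : ℤ)) * ∏ p ∈ Finset.univ.erase l, (1 - c m p * s p)) *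
          ((2 : ℝ) ^ (-(k : ℤ)) * ∏ p, (1 - c m p * s p)) ≤ 0) ∧
    (s l = -1 →
      0 ≤ ∑ m, 2 * a m * c m l *
          ((2 : ℝ) ^ (-(k : ℤ)) * ∏ p ∈ Finset.univ.erase l, (1 - c m p * s p)) *
          ((2 : ℝ) ^ (-(k : ℤ)) * ∏ p, (1 - c m p * s p))) := by
  have two_a_nonneg (m : Fin M) : 0 ≤ 2 * a m := by linarith [ha m]
  refine ⟨fun hsl => sum_nonpos fun m _ => ?_, fun hsl => sum_nonneg fun m _ => ?_⟩
  · rw [mul_prod_erase_mul_mul_prod, hsl, mul_one]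
    exact mul_nonpos_of_nonpos_of_nonneg
      (mul_nonpos_of_nonneg_of_nonpos (two_a_nonneg m) (mul_one_sub_self_nonpos (hc m l)))
      (sq_nonneg _)
  · rw [mul_prod_erase_mul_mul_prod, hsl, mul_neg_one, sub_neg_eq_add]
    exact mul_nonneg (mul_nonneg (two_a_nonneg m) (mul_one_add_self_nonneg (hc m l)))
      (sq_nonneg _)

open Finset in
/-- Forward invariance of the cube: on `[-1,1]^N`, if `s_l = 1` the `l`-th component of
the vector field is `≤ 0`, and if `s_l = -1` it is `≥ 0`. -/
theorem stmt_16 (N M k : ℕ) (c : Fin M → Fin N → ℝ) (a : Fin M → ℝ)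
    (ha : ∀ m, 0 < a m) (hc : ∀ m p, c m p ∈ ({-1, 0, 1} : Set ℝ))
    (s : Fin N → ℝ) (hs : ∀ p, s p ∈ Set.Icc (-1 : ℝ) 1) (l : Fin N) :
    (s l = 1 →
      ∑ m, 2 * a m * c m l *
          ((2 : ℝ) ^ (-(k : ℤ)) * ∏ p ∈ Finset.univ.erase l, (1 - c m p * s p)) *
          ((2 : ℝ) ^ (-(k : ℤ)) * ∏ p, (1 - c m p * s p)) ≤ 0) ∧
    (s l = -1 →
      0 ≤ ∑ m, 2 * a m * c m l *
          ((2 : ℝ) ^ (-(k : ℤ)) * ∏ p ∈ Finset.univ.erase l, (1 - c m p * s p)) *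
          ((2 : ℝ) ^ (-(k : ℤ)) * ∏ p, (1 - c m p * s p))) :=
  stmt_16_general N M k c a ha hc s l
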